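/- arXiv:2603.06491 — 2 statements merged into one kernel-verified Lean document; each statement's English description precedes it below -/
import Mathlib

section
/- Let φ : 𝔻 → 𝔻 be an injective holomorphic map. Then F_φ(z, w) = 0 for all z, w ∈ 𝔻 with z ≠ w if and only if φ is a fractional linear transformation, i.e., there exist a, b, c, d ∈ ℂ with a·d − b·c = 1 such that for every z ∈ 𝔻 one has c·z + d ≠ 0 and φ(z) = (a·z + b)/(c·z + d). -/
open MeasureTheory Complex Set

noncomputable section

/-- The open unit disk in ℂ. -/
def unitDisk : Set ℂ := {z : ℂ | ‖z‖ < 1}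

/-- The cocycle `F_φ(z,w) = φ'(z)φ'(w)/(φ(z) − φ(w))² − 1/(z − w)²`. -/
def Fcocycle (φ : ℂ → ℂ) (z w : ℂ) : ℂ :=
  deriv φ z * deriv φ w / (φ z - φ w) ^ 2 - 1 / (z - w) ^ 2

/-! A Möbius map with `D = ad − bc` has `φ(z) − φ(w) = D (z − w)/((cz + d)(cw + d))` and
`φ'(z) = D/(cz + d)²`, so `F_φ = 0`. Conversely, clearing denominators in `F_φ = 0` gives
`(φ(z) − φ(w))² = φ'(z) φ'(w) (z − w)²`. Applied with two base points `p, q` and square roots `s, t`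
of `φ'(p), φ'(q)`, it shows that the analytic functions `A(z) = (φ(z) − φ(p))(z − q) t` and
`B(z) = (φ(z) − φ(q))(z − p) s` satisfy `A² = B²`, so by the identity theorem `A = ε B` for a fixed
sign `ε`. This is a linear relation `φ(z)(cz + d) = az + b` with
`ad − bc = ε s t (φ(p) − φ(q))(p − q) ≠ 0`, which rescales to determinant one. -/

lemma unitDisk_eq_ball : unitDisk = Metric.ball (0 : ℂ) 1 := by
  ext z
  simp [unitDisk]

lemma AnalyticOnNhd.eqOn_or_eqOn_neg_of_sq_eq {𝕜 A : Type*} [NontriviallyNormedField 𝕜]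
    [NormedField A] [NormedAlgebra 𝕜 A] {U : Set 𝕜} {f g : 𝕜 → A}
    (hf : AnalyticOnNhd 𝕜 f U) (hg : AnalyticOnNhd 𝕜 g U) (hU : IsPreconnected U)
    (hfg : ∀ z ∈ U, f z ^ 2 = g z ^ 2) :
    (∀ z ∈ U, f z = g z) ∨ (∀ z ∈ U, f z = -g z) := by
  have hprod : ∀ z ∈ U, (f z - g z) * (f z + g z) = 0 := fun z hz => by
    linear_combination hfg z hz
  refine ((hf.sub hg).eq_zero_or_eq_zero_of_mul_eq_zero (hf.add hg) hprod hU).imp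
    (fun h z hz => sub_eq_zero.mp (h z hz)) (fun h z hz => eq_neg_of_add_eq_zero_left (h z hz))

section Mobius

variable {a b c d : ℂ}

lemma hasDerivAt_mobius {x : ℂ} (hx : c * x + d ≠ 0) :
    HasDerivAt (fun y => (a * y + b) / (c * y + d)) ((a * d - b * c) / (c * x + d) ^ 2) x := by
  have hnum : HasDerivAt (fun y => a * y + b) a x := by
    simpa using ((hasDerivAt_id x).const_mul a).add_const b
  have hden : HasDerivAt (fun y => c * y + d) c x := by
    simpa using ((hasDerivAt_id x).const_mul c).add_const d
  exact (hnum.div hden hx).congr_deriv (by ring)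

lemma mobius_sub_mobius {z w : ℂ} (hz : c * z + d ≠ 0) (hw : c * w + d ≠ 0) :
    (a * z + b) / (c * z + d) - (a * w + b) / (c * w + d) =
      (a * d - b * c) * (z - w) / ((c * z + d) * (c * w + d)) := by
  rw [div_sub_div _ _ hz hw]
  ring

lemma Fcocycle_eq_zero_of_eqOn_mobius {φ : ℂ → ℂ} {U : Set ℂ} (hU : IsOpen U)
    (hdet : a * d - b * c ≠ 0) (hφ : ∀ z ∈ U, c * z + d ≠ 0 ∧ φ z = (a * z + b) / (c * z + d))
    {z w : ℂ} (hz : z ∈ U) (hw : w ∈ U) (hzw : z ≠ w) :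
    Fcocycle φ z w = 0 := by
  have hderiv : ∀ x ∈ U, deriv φ x = (a * d - b * c) / (c * x + d) ^ 2 := fun x hx =>
    ((hasDerivAt_mobius (hφ x hx).1).congr_of_eventuallyEq
      (Filter.eventuallyEq_of_mem (hU.mem_nhds hx) fun y hy => (hφ y hy).2)).deriv
  have hzw' : z - w ≠ 0 := sub_ne_zero.mpr hzw
  have hcz := (hφ z hz).1
  have hcw := (hφ w hw).1
  rw [Fcocycle, hderiv z hz, hderiv w hw, (hφ z hz).2, (hφ w hw).2, mobius_sub_mobius hcz hcw]
  field_simp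
  ring

end Mobius

section Converse

variable {φ : ℂ → ℂ} {U : Set ℂ}

lemma sq_sub_eq_deriv_mul_deriv_of_Fcocycle_eq_zero (hφ : Set.InjOn φ U)
    (h : ∀ z ∈ U, ∀ w ∈ U, z ≠ w → Fcocycle φ z w = 0) :
    ∀ z ∈ U, ∀ w ∈ U, (φ z - φ w) ^ 2 = deriv φ z * deriv φ w * (z - w) ^ 2 := by
  intro z hz w hw
  rcases eq_or_ne z w with rfl | hzw
  · simp
  have hF := h z hz w hw hzw
  have hφzw : φ z - φ w ≠ 0 := sub_ne_zero.mpr (hφ.ne hz hw hzw)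
  have hzw' : z - w ≠ 0 := sub_ne_zero.mpr hzw
  rw [Fcocycle, sub_eq_zero] at hF
  field_simp at hF
  linear_combination -hF

lemma exists_mul_add_eq_of_sq_sub_eq (hU : IsPreconnected U) (hφ : AnalyticOnNhd ℂ φ U)
    {p q : ℂ} (hp : p ∈ U) (hq : q ∈ U) (hpq : φ p ≠ φ q)
    (hkey : ∀ z ∈ U, ∀ w ∈ U, (φ z - φ w) ^ 2 = deriv φ z * deriv φ w * (z - w) ^ 2) :
    ∃ a b c d : ℂ, a * d - b * c ≠ 0 ∧ ∀ z ∈ U, φ z * (c * z + d) = a * z + b := by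
  have hderiv : deriv φ p * deriv φ q ≠ 0 := fun h0 =>
    pow_ne_zero 2 (sub_ne_zero.mpr hpq) (by rw [hkey p hp q hq, h0, zero_mul])
  obtain ⟨s, hs⟩ := IsAlgClosed.exists_pow_nat_eq (deriv φ p) two_pos
  obtain ⟨t, ht⟩ := IsAlgClosed.exists_pow_nat_eq (deriv φ q) two_pos
  have hst : s * t ≠ 0 := fun h0 => hderiv (by rw [← hs, ← ht]; linear_combination s * t * h0)
  set A : ℂ → ℂ := fun z => (φ z - φ p) * (z - q) * t
  set B : ℂ → ℂ := fun z => (φ z - φ q) * (z - p) * s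
  have hA : AnalyticOnNhd ℂ A U :=
    ((hφ.sub analyticOnNhd_const).mul (analyticOnNhd_id.sub analyticOnNhd_const)).mul
      analyticOnNhd_const
  have hB : AnalyticOnNhd ℂ B U :=
    ((hφ.sub analyticOnNhd_const).mul (analyticOnNhd_id.sub analyticOnNhd_const)).mul
      analyticOnNhd_const
  have hAB_sq : ∀ z ∈ U, A z ^ 2 = B z ^ 2 := fun z hz => by
    linear_combination (z - q) ^ 2 * t ^ 2 * hkey z hz p hp - (z - p) ^ 2 * s ^ 2 * hkey z hz q hq
      + deriv φ z * (z - p) ^ 2 * (z - q) ^ 2 * (deriv φ p * ht - deriv φ q * hs)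
  obtain ⟨ε, hε, hAB⟩ : ∃ ε : ℂ, ε ≠ 0 ∧ ∀ z ∈ U, A z = ε * B z := by
    rcases hA.eqOn_or_eqOn_neg_of_sq_eq hB hU hAB_sq with h | h
    exacts [⟨1, one_ne_zero, by simpa using h⟩, ⟨-1, by norm_num, by simpa using h⟩]
  refine ⟨φ p * t - ε * φ q * s, ε * φ q * p * s - φ p * q * t, t - ε * s, ε * p * s - q * t,
    ?_, fun z hz => by linear_combination hAB z hz⟩
  have hdet : (φ p * t - ε * φ q * s) * (ε * p * s - q * t) -
      (ε * φ q * p * s - φ p * q * t) * (t - ε * s) = ε * (s * t) * (φ p - φ q) * (p - q) := by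
    ring
  rw [hdet]
  exact mul_ne_zero (mul_ne_zero (mul_ne_zero hε hst) (sub_ne_zero.mpr hpq))
    (sub_ne_zero.mpr (ne_of_apply_ne φ hpq))

lemma exists_det_eq_one_of_mul_eq {a b c d : ℂ} (hdet : a * d - b * c ≠ 0)
    (h : ∀ z ∈ U, φ z * (c * z + d) = a * z + b) :
    ∃ a b c d : ℂ, a * d - b * c = 1 ∧
      ∀ z ∈ U, c * z + d ≠ 0 ∧ φ z = (a * z + b) / (c * z + d) := by
  have hden : ∀ z ∈ U, c * z + d ≠ 0 := fun z hz hz0 => hdet <| by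
    have hnum : a * z + b = 0 := by rw [← h z hz, hz0, mul_zero]
    linear_combination a * hz0 - c * hnum
  obtain ⟨r, hr⟩ := IsAlgClosed.exists_pow_nat_eq (a * d - b * c) two_pos
  have hr0 : r ≠ 0 := by
    rintro rfl
    exact hdet (by simpa using hr.symm)
  have hscale : ∀ z, c / r * z + d / r = (c * z + d) / r := fun z => by ring
  refine ⟨a / r, b / r, c / r, d / r, ?_, fun z hz => ⟨?_, ?_⟩⟩
  · field_simp
    linear_combination -hr
  · rw [hscale]
    exact div_ne_zero (hden z hz) hr0
  · rw [hscale, eq_div_iff (div_ne_zero (hden z hz) hr0)]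
    field_simp
    linear_combination h z hz

end Converse

theorem statement_8_general (φ : ℂ → ℂ)
    (hφd : DifferentiableOn ℂ φ unitDisk)
    (hφi : Set.InjOn φ unitDisk) :
    (∀ z ∈ unitDisk, ∀ w ∈ unitDisk, z ≠ w → Fcocycle φ z w = 0) ↔
      ∃ a b c d : ℂ, a * d - b * c = 1 ∧
        ∀ z ∈ unitDisk, c * z + d ≠ 0 ∧ φ z = (a * z + b) / (c * z + d) := by
  have hU : IsOpen unitDisk := unitDisk_eq_ball ▸ Metric.isOpen_ball
  refine ⟨fun h => ?_, fun ⟨a, b, c, d, hdet, hφ⟩ z hz w hw hzw =>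
    Fcocycle_eq_zero_of_eqOn_mobius hU (by simp [hdet]) hφ hz hw hzw⟩
  have h0 : (0 : ℂ) ∈ unitDisk := by simp [unitDisk]
  have hhalf : (1 / 2 : ℂ) ∈ unitDisk := by norm_num [unitDisk]
  obtain ⟨a, b, c, d, hdet, hrel⟩ := exists_mul_add_eq_of_sq_sub_eq
    (unitDisk_eq_ball ▸ (convex_ball (0 : ℂ) 1).isPreconnected) (hφd.analyticOnNhd hU) h0 hhalf
    (hφi.ne h0 hhalf (by norm_num)) (sq_sub_eq_deriv_mul_deriv_of_Fcocycle_eq_zero hφi h)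
  exact exists_det_eq_one_of_mul_eq hdet hrel

/-- For an injective holomorphic map `φ : 𝔻 → 𝔻`, `F_φ` vanishes identically (off the
diagonal) if and only if `φ` is a fractional linear transformation. -/
theorem statement_8 (φ : ℂ → ℂ)
    (hφm : Set.MapsTo φ unitDisk unitDisk)
    (hφd : DifferentiableOn ℂ φ unitDisk)
    (hφi : Set.InjOn φ unitDisk) :
    (∀ z ∈ unitDisk, ∀ w ∈ unitDisk, z ≠ w → Fcocycle φ z w = 0) ↔
      ∃ a b c d : ℂ, a * d - b * c = 1 ∧
        ∀ z ∈ unitDisk, c * z + d ≠ 0 ∧ φ z = (a * z + b) / (c * z + d) :=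
  statement_8_general φ hφd hφi
end
end

section
/- Let f, g₁, g₂ : 𝔻 → 𝔻 be injective holomorphic maps with g₁(𝔻) ∩ g₂(𝔻) = ∅. If F_f is square-integrable on 𝔻 × 𝔻 and G_{g₁,g₂} is square-integrable on 𝔻 × 𝔻, then G_{f∘g₁, f∘g₂} is square-integrable on 𝔻 × 𝔻. -/
open MeasureTheory Complex Set

noncomputable section

/-- The normalized area measure `π⁻¹ · (2-dimensional Lebesgue measure)` on ℂ. -/
def μB : Measure ℂ := (ENNReal.ofReal (Real.pi)⁻¹) • (volume : Measure ℂ)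

/-- The kernel `G_{φ₁,φ₂}(z,w) = φ₁'(z)φ₂'(w)/(φ₁(z) − φ₂(w))²`. -/
def Gkernel (φ₁ φ₂ : ℂ → ℂ) (z w : ℂ) : ℂ :=
  deriv φ₁ z * deriv φ₂ w / (φ₁ z - φ₂ w) ^ 2

/-! On `𝔻 × 𝔻` the chain rule gives
`G_{f∘g₁,f∘g₂}(z,w) = g₁'(z) g₂'(w) F_f(g₁ z, g₂ w) + G_{g₁,g₂}(z,w)`,
the two `1/(g₁ z − g₂ w)²` terms cancelling. The first summand is the pullback of `F_f` under
the injective holomorphic map `(z,w) ↦ (g₁ z, g₂ w)` of real Jacobian `|g₁'(z)|² |g₂'(w)|²`,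
so by the change of variables formula its `L²` norm on `𝔻 × 𝔻` is at most that of `F_f` on
`g₁(𝔻) × g₂(𝔻) ⊆ 𝔻 × 𝔻`. The sum of two `L²` functions is in `L²`. -/

open scoped ENNReal

lemma isOpen_unitDisk : IsOpen unitDisk :=
  isOpen_lt continuous_norm continuous_const

instance : μB.IsAddHaarMeasure :=
  Measure.IsAddHaarMeasure.smul _ (ENNReal.ofReal_pos.2 (by positivity)).ne' ENNReal.ofReal_ne_top

lemma ContinuousLinearMap.det_restrictScalars_toSpanSingleton (c : ℂ) :
    ((ContinuousLinearMap.toSpanSingleton ℂ c).restrictScalars ℝ).det = ‖c‖ ^ 2 := by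
  simp [ContinuousLinearMap.det, LinearMap.det_restrictScalars, Algebra.norm_complex_apply,
    Complex.normSq_eq_norm_sq]

section ChangeOfVariables

variable {μ : Measure ℂ} [μ.IsAddHaarMeasure] {s t : Set ℂ} {g g' g₁ g₂ : ℂ → ℂ}

theorem lintegral_image_eq_lintegral_enorm_deriv_sq_mul (hs : MeasurableSet s)
    (hg : ∀ x ∈ s, HasDerivWithinAt g (g' x) s x) (hinj : InjOn g s) (G : ℂ → ℝ≥0∞) :
    ∫⁻ x in g '' s, G x ∂μ = ∫⁻ x in s, ‖g' x‖ₑ ^ 2 * G (g x) ∂μ := by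
  rw [lintegral_image_eq_lintegral_abs_det_fderiv_mul μ hs
    (fun x hx => ((hg x hx).hasFDerivWithinAt).restrictScalars ℝ) hinj G]
  congr with x
  rw [ContinuousLinearMap.det_restrictScalars_toSpanSingleton, abs_of_nonneg (by positivity),
    ENNReal.ofReal_pow (norm_nonneg _), ofReal_norm]

theorem lintegral_enorm_deriv_sq_mul_comp_le (hs : IsOpen s) (hd : DifferentiableOn ℂ g s)
    (hinj : InjOn g s) (hst : MapsTo g s t) (G : ℂ → ℝ≥0∞) :
    ∫⁻ x in s, ‖deriv g x‖ₑ ^ 2 * G (g x) ∂μ ≤ ∫⁻ x in t, G x ∂μ := by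
  rw [← lintegral_image_eq_lintegral_enorm_deriv_sq_mul hs.measurableSet
    (fun x hx => (hd.differentiableAt (hs.mem_nhds hx)).hasDerivAt.hasDerivWithinAt) hinj G]
  exact lintegral_mono_set hst.image_subset

theorem setLIntegral_prod_enorm_deriv_sq_mul_comp_le (hs : IsOpen s)
    (hd₁ : DifferentiableOn ℂ g₁ s) (hinj₁ : InjOn g₁ s) (hst₁ : MapsTo g₁ s t)
    (hd₂ : DifferentiableOn ℂ g₂ s) (hinj₂ : InjOn g₂ s) (hst₂ : MapsTo g₂ s t)
    (H : ℂ → ℂ → ℝ≥0∞)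
    (hH : AEMeasurable (fun p : ℂ × ℂ => H p.1 p.2) ((μ.prod μ).restrict (t ×ˢ t))) :
    ∫⁻ p in s ×ˢ s, ‖deriv g₁ p.1‖ₑ ^ 2 * (‖deriv g₂ p.2‖ₑ ^ 2 * H (g₁ p.1) (g₂ p.2))
        ∂(μ.prod μ) ≤ ∫⁻ p in t ×ˢ t, H p.1 p.2 ∂(μ.prod μ) :=
  calc _ ≤ ∫⁻ z in s, ∫⁻ w in s,
          ‖deriv g₁ z‖ₑ ^ 2 * (‖deriv g₂ w‖ₑ ^ 2 * H (g₁ z) (g₂ w)) ∂μ ∂μ := by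
        rw [← Measure.prod_restrict]
        exact lintegral_prod_le _
    _ = ∫⁻ z in s, ‖deriv g₁ z‖ₑ ^ 2 *
          ∫⁻ w in s, ‖deriv g₂ w‖ₑ ^ 2 * H (g₁ z) (g₂ w) ∂μ ∂μ := by
        congr with z
        exact lintegral_const_mul' _ _ (by finiteness)
    _ ≤ ∫⁻ z in s, ‖deriv g₁ z‖ₑ ^ 2 * ∫⁻ b in t, H (g₁ z) b ∂μ ∂μ :=
        lintegral_mono fun z =>
          mul_le_mul_right (lintegral_enorm_deriv_sq_mul_comp_le hs hd₂ hinj₂ hst₂ _) _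
    _ ≤ ∫⁻ a in t, ∫⁻ b in t, H a b ∂μ ∂μ :=
        lintegral_enorm_deriv_sq_mul_comp_le hs hd₁ hinj₁ hst₁ _
    _ = _ := (setLIntegral_prod _ hH).symm

theorem integrableOn_sq_norm_deriv_mul_comp (hs : IsOpen s)
    (hd₁ : DifferentiableOn ℂ g₁ s) (hinj₁ : InjOn g₁ s) (hst₁ : MapsTo g₁ s t)
    (hd₂ : DifferentiableOn ℂ g₂ s) (hinj₂ : InjOn g₂ s) (hst₂ : MapsTo g₂ s t)
    {K : ℂ → ℂ → ℂ}
    (hK : IntegrableOn (fun p : ℂ × ℂ => ‖K p.1 p.2‖ ^ 2) (t ×ˢ t) (μ.prod μ))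
    (hmeas : AEStronglyMeasurable
      (fun p : ℂ × ℂ => deriv g₁ p.1 * deriv g₂ p.2 * K (g₁ p.1) (g₂ p.2))
      ((μ.prod μ).restrict (s ×ˢ s))) :
    IntegrableOn (fun p : ℂ × ℂ => ‖deriv g₁ p.1 * deriv g₂ p.2 * K (g₁ p.1) (g₂ p.2)‖ ^ 2)
      (s ×ˢ s) (μ.prod μ) := by
  refine ⟨hmeas.norm.pow 2, ?_⟩
  have hK' := hK.2
  simp only [HasFiniteIntegral, enorm_pow, enorm_norm, enorm_mul, mul_pow, mul_assoc] at hK' ⊢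
  refine lt_of_le_of_lt ?_ hK'
  refine setLIntegral_prod_enorm_deriv_sq_mul_comp_le hs hd₁ hinj₁ hst₁ hd₂ hinj₂ hst₂
    (fun a b => ‖K a b‖ₑ ^ 2) ?_
  simpa only [enorm_pow, enorm_norm] using hK.1.enorm

end ChangeOfVariables

lemma continuousOn_gkernel {φ₁ φ₂ : ℂ → ℂ} {s : Set ℂ} (hs : IsOpen s)
    (h₁ : DifferentiableOn ℂ φ₁ s) (h₂ : DifferentiableOn ℂ φ₂ s)
    (hne : ∀ z ∈ s, ∀ w ∈ s, φ₁ z ≠ φ₂ w) :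
    ContinuousOn (fun p : ℂ × ℂ => Gkernel φ₁ φ₂ p.1 p.2) (s ×ˢ s) := by
  have hfst : MapsTo Prod.fst (s ×ˢ s) s := fun _ hp => hp.1
  have hsnd : MapsTo Prod.snd (s ×ˢ s) s := fun _ hp => hp.2
  have hd₁ := (h₁.analyticOnNhd hs).deriv.continuousOn.comp continuousOn_fst hfst
  have hd₂ := (h₂.analyticOnNhd hs).deriv.continuousOn.comp continuousOn_snd hsnd
  have hc₁ := h₁.continuousOn.comp continuousOn_fst hfst
  have hc₂ := h₂.continuousOn.comp continuousOn_snd hsnd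
  exact (hd₁.mul hd₂).div ((hc₁.sub hc₂).pow 2)
    fun p hp => pow_ne_zero 2 (sub_ne_zero.2 (hne _ hp.1 _ hp.2))

lemma gkernel_comp_eq_mul_fcocycle_add {f g₁ g₂ : ℂ → ℂ} {z w : ℂ}
    (hf₁ : DifferentiableAt ℂ f (g₁ z)) (hf₂ : DifferentiableAt ℂ f (g₂ w))
    (hg₁ : DifferentiableAt ℂ g₁ z) (hg₂ : DifferentiableAt ℂ g₂ w) :
    Gkernel (f ∘ g₁) (f ∘ g₂) z w =
      deriv g₁ z * deriv g₂ w * Fcocycle f (g₁ z) (g₂ w) + Gkernel g₁ g₂ z w := by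
  simp only [Gkernel, Fcocycle, Function.comp_apply, deriv_comp z hf₁ hg₁, deriv_comp w hf₂ hg₂]
  ring

theorem statement_10_general (f g₁ g₂ : ℂ → ℂ)
    (hfd : DifferentiableOn ℂ f unitDisk)
    (hfi : Set.InjOn f unitDisk)
    (hg₁m : Set.MapsTo g₁ unitDisk unitDisk)
    (hg₁d : DifferentiableOn ℂ g₁ unitDisk)
    (hg₁i : Set.InjOn g₁ unitDisk)
    (hg₂m : Set.MapsTo g₂ unitDisk unitDisk)
    (hg₂d : DifferentiableOn ℂ g₂ unitDisk)
    (hg₂i : Set.InjOn g₂ unitDisk)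
    (hdisj : g₁ '' unitDisk ∩ g₂ '' unitDisk = ∅)
    (hFsq : IntegrableOn (fun p : ℂ × ℂ => ‖Fcocycle f p.1 p.2‖ ^ 2)
      (unitDisk ×ˢ unitDisk) (μB.prod μB))
    (hGsq : IntegrableOn (fun p : ℂ × ℂ => ‖Gkernel g₁ g₂ p.1 p.2‖ ^ 2)
      (unitDisk ×ˢ unitDisk) (μB.prod μB)) :
    IntegrableOn (fun p : ℂ × ℂ => ‖Gkernel (f ∘ g₁) (f ∘ g₂) p.1 p.2‖ ^ 2)
      (unitDisk ×ˢ unitDisk) (μB.prod μB) := by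
  have hopen := isOpen_unitDisk
  have hne : ∀ z ∈ unitDisk, ∀ w ∈ unitDisk, g₁ z ≠ g₂ w := fun z hz w hw h =>
    (disjoint_iff_inter_eq_empty.2 hdisj).ne_of_mem (mem_image_of_mem _ hz)
      (mem_image_of_mem _ hw) h
  -- Disjointness of the images keeps both kernels continuous, hence measurable, on `𝔻 × 𝔻`.
  have hT := continuousOn_gkernel hopen (hfd.comp hg₁d hg₁m) (hfd.comp hg₂d hg₂m)
    fun z hz w hw h => hne z hz w hw (hfi (hg₁m hz) (hg₂m hw) h)
  have hG := continuousOn_gkernel hopen hg₁d hg₂d hne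
  have hat {φ : ℂ → ℂ} (hφ : DifferentiableOn ℂ φ unitDisk) {z : ℂ} (hz : z ∈ unitDisk) :
      DifferentiableAt ℂ φ z := hφ.differentiableAt (hopen.mem_nhds hz)
  have hsplit : ∀ p ∈ unitDisk ×ˢ unitDisk, Gkernel (f ∘ g₁) (f ∘ g₂) p.1 p.2 =
      deriv g₁ p.1 * deriv g₂ p.2 * Fcocycle f (g₁ p.1) (g₂ p.2) + Gkernel g₁ g₂ p.1 p.2 :=
    fun _ ⟨hz, hw⟩ => gkernel_comp_eq_mul_fcocycle_add (hat hfd (hg₁m hz)) (hat hfd (hg₂m hw))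
      (hat hg₁d hz) (hat hg₂d hw)
  have hmeas : MeasurableSet (unitDisk ×ˢ unitDisk) := hopen.measurableSet.prod hopen.measurableSet
  have hsplit_ae := ae_restrict_of_forall_mem (μ := μB.prod μB) hmeas hsplit
  have hFmeas : AEStronglyMeasurable
      (fun p : ℂ × ℂ => deriv g₁ p.1 * deriv g₂ p.2 * Fcocycle f (g₁ p.1) (g₂ p.2))
      ((μB.prod μB).restrict (unitDisk ×ˢ unitDisk)) :=
    ((hT.aestronglyMeasurable hmeas).sub (hG.aestronglyMeasurable hmeas)).congr
      (hsplit_ae.mono fun _ hp => sub_eq_of_eq_add hp)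
  have hFpull :=
    integrableOn_sq_norm_deriv_mul_comp hopen hg₁d hg₁i hg₁m hg₂d hg₂i hg₂m hFsq hFmeas
  rw [IntegrableOn, ← memLp_two_iff_integrable_sq_norm hFmeas] at hFpull
  rw [IntegrableOn, ← memLp_two_iff_integrable_sq_norm (hG.aestronglyMeasurable hmeas)] at hGsq
  rw [IntegrableOn, ← memLp_two_iff_integrable_sq_norm (hT.aestronglyMeasurable hmeas)]
  exact (hFpull.add hGsq).ae_eq (hsplit_ae.mono fun _ => Eq.symm)

/-- If `F_f` and `G_{g₁,g₂}` are square-integrable on `𝔻 × 𝔻`, where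
`g₁(𝔻) ∩ g₂(𝔻) = ∅`, then `G_{f∘g₁, f∘g₂}` is square-integrable on `𝔻 × 𝔻`. -/
theorem statement_10 (f g₁ g₂ : ℂ → ℂ)
    (hfm : Set.MapsTo f unitDisk unitDisk)
    (hfd : DifferentiableOn ℂ f unitDisk)
    (hfi : Set.InjOn f unitDisk)
    (hg₁m : Set.MapsTo g₁ unitDisk unitDisk)
    (hg₁d : DifferentiableOn ℂ g₁ unitDisk)
    (hg₁i : Set.InjOn g₁ unitDisk)
    (hg₂m : Set.MapsTo g₂ unitDisk unitDisk)
    (hg₂d : DifferentiableOn ℂ g₂ unitDisk)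
    (hg₂i : Set.InjOn g₂ unitDisk)
    (hdisj : g₁ '' unitDisk ∩ g₂ '' unitDisk = ∅)
    (hFsq : IntegrableOn (fun p : ℂ × ℂ => ‖Fcocycle f p.1 p.2‖ ^ 2)
      (unitDisk ×ˢ unitDisk) (μB.prod μB))
    (hGsq : IntegrableOn (fun p : ℂ × ℂ => ‖Gkernel g₁ g₂ p.1 p.2‖ ^ 2)
      (unitDisk ×ˢ unitDisk) (μB.prod μB)) :
    IntegrableOn (fun p : ℂ × ℂ => ‖Gkernel (f ∘ g₁) (f ∘ g₂) p.1 p.2‖ ^ 2)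
      (unitDisk ×ˢ unitDisk) (μB.prod μB) :=
  statement_10_general f g₁ g₂ hfd hfi hg₁m hg₁d hg₁i hg₂m hg₂d hg₂i hdisj hFsq hGsq
end
end
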